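/- Fix real parameters α, γ, δ, ε > 0 and let β₁ ∈ (1/ε, ∞) be the unique solution of g(β₁) = 1. For β > β₁ define F(β) = Σ₁(P₃₄(β),β) + Σ₂(P₃₄(β),β)·e^{-αβ-P₃₄(β)}/(1 - g(β)) (well defined since g(β) < 1 for β > β₁). Then F is strictly decreasing on (β₁, ∞), F(β) → +∞ as β decreases to β₁, and F(β) → 0 as β → +∞. Consequently there exists a unique β_c ∈ (β₁, ∞) with F(β_c) = 1, and F(β) > 1 if and only if β₁ < β < β_c. (Lemma 2 of the paper defining the transition parameter β_c, with β_c > β₁.) -/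
import Mathlib


open Filter

/-- `P₃₄(β) = γβ + log(1 + e^{δβ})`. -/
noncomputable def P34 (γ δ β : ℝ) : ℝ := γ * β + Real.log (1 + Real.exp (δ * β))

/-- `Σ₁(Z,β) = ∑_{n=1}^∞ e^{-n(αβ+Z)}` (indexed by `n : ℕ` via `n ↦ n+1`). -/
noncomputable def S1 (α β Z : ℝ) : ℝ := ∑' n : ℕ, Real.exp (-((n : ℝ) + 1) * (α * β + Z))

/-- `Σ₂(Z,β) = ∑_{n=1}^∞ (n+1)^{-β} e^{-nZ}`. -/
noncomputable def S2 (β Z : ℝ) : ℝ :=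
  ∑' n : ℕ, ((n : ℝ) + 2) ^ (-β) * Real.exp (-((n : ℝ) + 1) * Z)

/-- `Σ₃(Z,β) = (1+e^{δβ})^{-2} ∑_{n=1}^∞ (n+1)^{-εβ} e^{n(P₃₄(β)-Z)}`. -/
noncomputable def S3 (γ δ ε β Z : ℝ) : ℝ :=
  (∑' n : ℕ, ((n : ℝ) + 2) ^ (-(ε * β)) * Real.exp (((n : ℝ) + 1) * (P34 γ δ β - Z))) /
    (1 + Real.exp (δ * β)) ^ 2

/-- `g(β) = Σ₂(P₃₄(β),β)·Σ₃(P₃₄(β),β)`. -/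
noncomputable def g (γ δ ε β : ℝ) : ℝ := S2 β (P34 γ δ β) * S3 γ δ ε β (P34 γ δ β)

/-- `F(β) = Σ₁(P₃₄(β),β) + Σ₂(P₃₄(β),β)·e^{-αβ-P₃₄(β)}/(1 - g(β))`. -/
noncomputable def F (α γ δ ε β : ℝ) : ℝ :=
  S1 α β (P34 γ δ β) +
    S2 β (P34 γ δ β) * Real.exp (-(α * β) - P34 γ δ β) / (1 - g γ δ ε β)

section aux

variable {α γ δ ε : ℝ}

lemma P34_pos (hγ : 0 < γ) {β : ℝ} (hβ : 0 < β) : 0 < P34 γ δ β := by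
  have h1 : (1:ℝ) < 1 + Real.exp (δ * β) := by linarith [Real.exp_pos (δ * β)]
  exact add_pos (mul_pos hγ hβ) (Real.log_pos h1)

lemma P34_mono (hγ : 0 < γ) (hδ : 0 < δ) : StrictMono (P34 γ δ) := by
  intro a b hab
  have h2 : Real.log (1 + Real.exp (δ * a)) < Real.log (1 + Real.exp (δ * b)) := by
    apply Real.log_lt_log (by positivity)
    have := Real.exp_lt_exp.mpr (mul_lt_mul_of_pos_left hab hδ)
    linarith
  have h1 : γ * a < γ * b := mul_lt_mul_of_pos_left hab hγ
  unfold P34; linarith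

lemma P34_cont : Continuous (P34 γ δ) := by
  unfold P34
  refine Continuous.add (by continuity) ?_
  refine continuous_iff_continuousAt.mpr fun x => ?_
  exact ContinuousAt.log (by fun_prop) (by positivity)

lemma geo_term_eq (x : ℝ) (n : ℕ) :
    Real.exp (-((n:ℝ)+1) * x) = Real.exp (-x) ^ (n+1) := by
  rw [← Real.exp_nat_mul]
  congr 1
  push_cast
  ring

lemma geo_summable {x : ℝ} (hx : 0 < x) :
    Summable (fun n : ℕ => Real.exp (-((n:ℝ)+1) * x)) := by
  have hr0 : 0 ≤ Real.exp (-x) := (Real.exp_pos _).le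
  have hr1 : Real.exp (-x) < 1 := Real.exp_lt_one_iff.mpr (by linarith)
  have h := (summable_geometric_of_lt_one hr0 hr1).mul_left (Real.exp (-x))
  refine h.congr fun n => ?_
  rw [geo_term_eq]; ring

lemma geo_tsum {x : ℝ} (hx : 0 < x) :
    ∑' n : ℕ, Real.exp (-((n:ℝ)+1) * x) = Real.exp (-x) / (1 - Real.exp (-x)) := by
  have hr0 : 0 ≤ Real.exp (-x) := (Real.exp_pos _).le
  have hr1 : Real.exp (-x) < 1 := Real.exp_lt_one_iff.mpr (by linarith)
  calc ∑' n : ℕ, Real.exp (-((n:ℝ)+1) * x)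
      = ∑' n : ℕ, Real.exp (-x) * Real.exp (-x) ^ n := by
        refine tsum_congr fun n => ?_; rw [geo_term_eq]; ring
    _ = Real.exp (-x) * (1 - Real.exp (-x))⁻¹ := by
        rw [tsum_mul_left, tsum_geometric_of_lt_one hr0 hr1]
    _ = _ := by rw [div_eq_mul_inv]

lemma summable_rpow_shift {p : ℝ} (hp : 1 < p) :
    Summable (fun n : ℕ => ((n:ℝ)+2) ^ (-p)) := by
  have h : Summable (fun n : ℕ => (n:ℝ) ^ (-p)) :=
    Real.summable_nat_rpow.mpr (by linarith)
  have h2 := h.comp_injective (add_left_injective 2)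
  refine h2.congr fun n => ?_
  simp only [Function.comp]
  push_cast
  norm_num

lemma term2_le_geo (hγ : 0 < γ) {β : ℝ} (hβ : 0 < β) (n : ℕ) :
    ((n:ℝ)+2) ^ (-β) * Real.exp (-((n:ℝ)+1) * P34 γ δ β)
      ≤ Real.exp (-((n:ℝ)+1) * P34 γ δ β) := by
  have h1 : ((n:ℝ)+2) ^ (-β) ≤ 1 :=
    Real.rpow_le_one_of_one_le_of_nonpos
      (by have := Nat.cast_nonneg (α := ℝ) n; linarith) (by linarith)
  exact mul_le_of_le_one_left (Real.exp_pos _).le h1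

lemma S2_summable (hγ : 0 < γ) {β : ℝ} (hβ : 0 < β) :
    Summable (fun n : ℕ => ((n:ℝ)+2) ^ (-β) * Real.exp (-((n:ℝ)+1) * P34 γ δ β)) :=
  Summable.of_nonneg_of_le (fun n => by positivity) (term2_le_geo hγ hβ)
    (geo_summable (P34_pos hγ hβ))

lemma S2_pos (hγ : 0 < γ) {β : ℝ} (hβ : 0 < β) : 0 < S2 β (P34 γ δ β) :=
  Summable.tsum_pos (S2_summable hγ hβ) (fun n => by positivity) 0 (by positivity)

lemma S2_nonneg : 0 ≤ S2 β (P34 γ δ β) :=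
  tsum_nonneg (fun n => by positivity)

lemma term2_lt (hγ : 0 < γ) (hδ : 0 < δ) {a b : ℝ} (ha : 0 < a) (hab : a < b) (n : ℕ) :
    ((n:ℝ)+2) ^ (-b) * Real.exp (-((n:ℝ)+1) * P34 γ δ b)
      < ((n:ℝ)+2) ^ (-a) * Real.exp (-((n:ℝ)+1) * P34 γ δ a) := by
  have hbase : (1:ℝ) < (n:ℝ)+2 := by have := Nat.cast_nonneg (α := ℝ) n; linarith
  have h1 : ((n:ℝ)+2) ^ (-b) < ((n:ℝ)+2) ^ (-a) :=
    (Real.rpow_lt_rpow_left_iff hbase).mpr (by linarith)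
  have h2 : Real.exp (-((n:ℝ)+1) * P34 γ δ b) < Real.exp (-((n:ℝ)+1) * P34 γ δ a) := by
    apply Real.exp_lt_exp.mpr
    have hP := P34_mono hγ hδ hab
    have hneg : -((n:ℝ)+1) < 0 := by have := Nat.cast_nonneg (α := ℝ) n; linarith
    exact mul_lt_mul_of_neg_left hP hneg
  exact mul_lt_mul'' h1 h2 (Real.rpow_nonneg (by positivity) _) (Real.exp_pos _).le

lemma S2_anti (hγ : 0 < γ) (hδ : 0 < δ) :
    StrictAntiOn (fun β => S2 β (P34 γ δ β)) (Set.Ioi 0) := by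
  intro a ha b hb hab
  simp only [S2]
  exact Summable.tsum_lt_tsum_of_nonneg (fun n => by positivity)
    (fun n => (term2_lt hγ hδ ha hab n).le) (term2_lt hγ hδ ha hab 0)
    (S2_summable hγ ha)

lemma S2_contOn (hγ : 0 < γ) (hδ : 0 < δ) {c : ℝ} (hc : 0 < c) :
    ContinuousOn (fun β => S2 β (P34 γ δ β)) (Set.Ici c) := by
  simp only [S2]
  apply continuousOn_tsum (u := fun n : ℕ => Real.exp (-((n:ℝ)+1) * P34 γ δ c))
  · intro n
    apply ContinuousOn.mul
    · have hb : (0:ℝ) < (n:ℝ)+2 := by positivity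
      have : (fun β : ℝ => ((n:ℝ)+2) ^ (-β))
          = fun β : ℝ => Real.exp (Real.log ((n:ℝ)+2) * (-β)) := by
        funext β; rw [Real.rpow_def_of_pos hb]
      rw [this]; fun_prop
    · exact (Real.continuous_exp.comp ((continuous_const.mul P34_cont))).continuousOn
  · exact geo_summable (P34_pos hγ hc)
  · intro n x hx
    rw [Real.norm_eq_abs, abs_of_nonneg (by positivity)]
    have hx0 : 0 < x := lt_of_lt_of_le hc hx
    calc ((n:ℝ)+2) ^ (-x) * Real.exp (-((n:ℝ)+1) * P34 γ δ x)
        ≤ Real.exp (-((n:ℝ)+1) * P34 γ δ x) := term2_le_geo hγ hx0 n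
      _ ≤ Real.exp (-((n:ℝ)+1) * P34 γ δ c) := by
          apply Real.exp_le_exp.mpr
          have hP := (P34_mono hγ hδ).monotone hx
          have hneg : -((n:ℝ)+1) ≤ 0 := by have := Nat.cast_nonneg (α := ℝ) n; linarith
          exact mul_le_mul_of_nonpos_left hP hneg

lemma S2_contAt (hγ : 0 < γ) (hδ : 0 < δ) {x : ℝ} (hx : 0 < x) :
    ContinuousAt (fun β => S2 β (P34 γ δ β)) x :=
  (S2_contOn hγ hδ (half_pos hx)).continuousAt (Ici_mem_nhds (by linarith))

lemma one_lt_eps_mul (hε : 0 < ε) {β : ℝ} (hβ : 1/ε < β) : 1 < ε * β := by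
  rw [div_lt_iff₀ hε] at hβ; linarith

lemma Q_summable (hε : 0 < ε) {β : ℝ} (hβ : 1/ε < β) :
    Summable (fun n : ℕ => ((n:ℝ)+2) ^ (-(ε*β))) :=
  summable_rpow_shift (one_lt_eps_mul hε hβ)

lemma Q_pos (hε : 0 < ε) {β : ℝ} (hβ : 1/ε < β) :
    0 < ∑' n : ℕ, ((n:ℝ)+2) ^ (-(ε*β)) :=
  Summable.tsum_pos (Q_summable hε hβ) (fun n => by positivity) 0 (by positivity)

lemma Q_anti (hε : 0 < ε) {a b : ℝ} (ha : 1/ε < a) (hab : a < b) :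
    (∑' n : ℕ, ((n:ℝ)+2) ^ (-(ε*b))) < ∑' n : ℕ, ((n:ℝ)+2) ^ (-(ε*a)) := by
  have key : ∀ n : ℕ, ((n:ℝ)+2) ^ (-(ε*b)) < ((n:ℝ)+2) ^ (-(ε*a)) := by
    intro n
    have hbase : (1:ℝ) < (n:ℝ)+2 := by have := Nat.cast_nonneg (α := ℝ) n; linarith
    refine (Real.rpow_lt_rpow_left_iff hbase).mpr ?_
    have : ε * a < ε * b := mul_lt_mul_of_pos_left hab hε
    linarith
  exact Summable.tsum_lt_tsum_of_nonneg (fun n => by positivity)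
    (fun n => (key n).le) (key 0) (Q_summable hε ha)

lemma Q_contOn (hε : 0 < ε) {c : ℝ} (hc : 1/ε < c) :
    ContinuousOn (fun β : ℝ => ∑' n : ℕ, ((n:ℝ)+2) ^ (-(ε*β))) (Set.Ici c) := by
  apply continuousOn_tsum (u := fun n : ℕ => ((n:ℝ)+2) ^ (-(ε*c)))
  · intro n
    have hb : (0:ℝ) < (n:ℝ)+2 := by positivity
    have : (fun β : ℝ => ((n:ℝ)+2) ^ (-(ε*β)))
        = fun β : ℝ => Real.exp (Real.log ((n:ℝ)+2) * (-(ε*β))) := by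
      funext β; rw [Real.rpow_def_of_pos hb]
    rw [this]; fun_prop
  · exact Q_summable hε hc
  · intro n x hx
    rw [Real.norm_eq_abs, abs_of_nonneg (by positivity)]
    have hbase : (1:ℝ) ≤ (n:ℝ)+2 := by have := Nat.cast_nonneg (α := ℝ) n; linarith
    apply Real.rpow_le_rpow_of_exponent_le hbase
    have : ε * c ≤ ε * x := mul_le_mul_of_nonneg_left hx hε.le
    linarith

lemma Q_contAt (hε : 0 < ε) {x : ℝ} (hx : 1/ε < x) :
    ContinuousAt (fun β : ℝ => ∑' n : ℕ, ((n:ℝ)+2) ^ (-(ε*β))) x :=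
  (Q_contOn hε (c := (1/ε + x)/2) (by linarith)).continuousAt
    (Ici_mem_nhds (by linarith))

lemma S3_eq (β : ℝ) :
    S3 γ δ ε β (P34 γ δ β)
      = (∑' n : ℕ, ((n:ℝ)+2) ^ (-(ε*β))) / (1 + Real.exp (δ*β)) ^ 2 := by
  unfold S3
  congr 1
  refine tsum_congr fun n => ?_
  rw [sub_self, mul_zero, Real.exp_zero, mul_one]

lemma g_eq (β : ℝ) :
    g γ δ ε β = S2 β (P34 γ δ β) *
      ((∑' n : ℕ, ((n:ℝ)+2) ^ (-(ε*β))) / (1 + Real.exp (δ*β)) ^ 2) := by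
  unfold g; rw [S3_eq]

lemma D_pos (β : ℝ) : (0:ℝ) < (1 + Real.exp (δ*β)) ^ 2 := by positivity

lemma g_pos (hγ : 0 < γ) (hε : 0 < ε) {β : ℝ} (hβ : 1/ε < β) (hβ0 : 0 < β) :
    0 < g γ δ ε β := by
  rw [g_eq]
  exact mul_pos (S2_pos hγ hβ0) (div_pos (Q_pos hε hβ) (D_pos β))

lemma g_anti (hγ : 0 < γ) (hδ : 0 < δ) (hε : 0 < ε) :
    StrictAntiOn (g γ δ ε) (Set.Ioi (1/ε)) := by
  intro a ha b hb hab
  have hεpos : (0:ℝ) < 1/ε := by positivity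
  have ha' : 1/ε < a := ha
  have ha0 : 0 < a := lt_trans hεpos ha'
  have hb0 : 0 < b := lt_trans ha0 hab
  rw [g_eq, g_eq]
  have h2 : S2 b (P34 γ δ b) < S2 a (P34 γ δ a) :=
    S2_anti hγ hδ (Set.mem_Ioi.mpr ha0) (Set.mem_Ioi.mpr hb0) hab
  have hq : (∑' n : ℕ, ((n:ℝ)+2) ^ (-(ε*b))) < ∑' n : ℕ, ((n:ℝ)+2) ^ (-(ε*a)) :=
    Q_anti hε ha' hab
  have hD : (1 + Real.exp (δ*a)) ^ 2 ≤ (1 + Real.exp (δ*b)) ^ 2 := by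
    have : Real.exp (δ*a) ≤ Real.exp (δ*b) :=
      Real.exp_le_exp.mpr (mul_le_mul_of_nonneg_left hab.le hδ.le)
    have h1 : (0:ℝ) < 1 + Real.exp (δ*a) := by positivity
    nlinarith
  have hfrac : (∑' n : ℕ, ((n:ℝ)+2) ^ (-(ε*b))) / (1 + Real.exp (δ*b)) ^ 2
      < (∑' n : ℕ, ((n:ℝ)+2) ^ (-(ε*a))) / (1 + Real.exp (δ*a)) ^ 2 := by
    calc (∑' n : ℕ, ((n:ℝ)+2) ^ (-(ε*b))) / (1 + Real.exp (δ*b)) ^ 2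
        ≤ (∑' n : ℕ, ((n:ℝ)+2) ^ (-(ε*b))) / (1 + Real.exp (δ*a)) ^ 2 := by
          apply div_le_div_of_nonneg_left (tsum_nonneg (fun n => by positivity)) (D_pos a) hD
      _ < (∑' n : ℕ, ((n:ℝ)+2) ^ (-(ε*a))) / (1 + Real.exp (δ*a)) ^ 2 := by
          exact (div_lt_div_iff_of_pos_right (D_pos a)).mpr hq
  exact mul_lt_mul'' h2 hfrac S2_nonneg
    (div_nonneg (tsum_nonneg (fun n => by positivity)) (D_pos b).le)

end aux

section main

variable {α γ δ ε : ℝ}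

lemma neg_arg_eq (α γ δ : ℝ) (β : ℝ) : -(α*β + P34 γ δ β) = -(α*β) - P34 γ δ β := by ring

lemma S1_eq (hα : 0 < α) (hγ : 0 < γ) {β : ℝ} (hβ : 0 < β) :
    S1 α β (P34 γ δ β)
      = Real.exp (-(α*β) - P34 γ δ β) / (1 - Real.exp (-(α*β) - P34 γ δ β)) := by
  have hx : 0 < α*β + P34 γ δ β := add_pos (mul_pos hα hβ) (P34_pos hγ hβ)
  unfold S1
  rw [geo_tsum hx, neg_arg_eq]

lemma rr_cont : Continuous (fun β : ℝ => Real.exp (-(α*β) - P34 γ δ β)) :=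
  Real.continuous_exp.comp (((continuous_const.mul continuous_id).neg).sub P34_cont)

lemma rr_pos (β : ℝ) : 0 < Real.exp (-(α*β) - P34 γ δ β) := Real.exp_pos _

lemma rr_lt_one (hα : 0 < α) (hγ : 0 < γ) {β : ℝ} (hβ : 0 < β) :
    Real.exp (-(α*β) - P34 γ δ β) < 1 := by
  have hx : 0 < α*β + P34 γ δ β := add_pos (mul_pos hα hβ) (P34_pos hγ hβ)
  exact Real.exp_lt_one_iff.mpr (by linarith)

lemma rr_anti (hα : 0 < α) (hγ : 0 < γ) (hδ : 0 < δ) {a b : ℝ} (hab : a < b) :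
    Real.exp (-(α*b) - P34 γ δ b) < Real.exp (-(α*a) - P34 γ δ a) := by
  apply Real.exp_lt_exp.mpr
  have h1 : α*a < α*b := mul_lt_mul_of_pos_left hab hα
  have h2 := P34_mono hγ hδ hab
  linarith

lemma F_eq (hα : 0 < α) (hγ : 0 < γ) {β : ℝ} (hβ : 0 < β) :
    F α γ δ ε β
      = Real.exp (-(α*β) - P34 γ δ β) / (1 - Real.exp (-(α*β) - P34 γ δ β))
        + S2 β (P34 γ δ β) * Real.exp (-(α*β) - P34 γ δ β) / (1 - g γ δ ε β) := by
  unfold F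
  rw [S1_eq hα hγ hβ]

lemma div_one_sub_lt {x y : ℝ} (hx : 0 ≤ x) (hxy : x < y) (hy : y < 1) :
    x/(1-x) < y/(1-y) := by
  rw [div_lt_div_iff₀ (by linarith) (by linarith)]
  nlinarith

lemma g_lt_one (hγ : 0 < γ) (hδ : 0 < δ) (hε : 0 < ε)
    {β₁ : ℝ} (hβ₁ : 1 / ε < β₁) (hgβ₁ : g γ δ ε β₁ = 1) :
    ∀ b, β₁ < b → g γ δ ε b < 1 := by
  intro b hb
  have := g_anti hγ hδ hε (Set.mem_Ioi.mpr hβ₁) (Set.mem_Ioi.mpr (lt_trans hβ₁ hb)) hb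
  rwa [hgβ₁] at this

lemma g_contAt (hγ : 0 < γ) (hδ : 0 < δ) (hε : 0 < ε) {x : ℝ} (hx0 : 0 < x)
    (hxe : 1/ε < x) : ContinuousAt (g γ δ ε) x := by
  have hrw : g γ δ ε = fun β => S2 β (P34 γ δ β) *
      ((∑' n : ℕ, ((n:ℝ)+2) ^ (-(ε*β))) / (1 + Real.exp (δ*β)) ^ 2) := funext g_eq
  rw [hrw]
  refine (S2_contAt hγ hδ hx0).mul ((Q_contAt hε hxe).div ?_ (ne_of_gt (D_pos x)))
  exact ((continuous_const.add (Real.continuous_exp.comp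
    (continuous_const.mul continuous_id))).pow 2).continuousAt

lemma F_contAt (hα : 0 < α) (hγ : 0 < γ) (hδ : 0 < δ) (hε : 0 < ε) {x : ℝ}
    (hx0 : 0 < x) (hxe : 1/ε < x) (hgx : g γ δ ε x < 1) :
    ContinuousAt (F α γ δ ε) x := by
  have hrr : ContinuousAt (fun β : ℝ => Real.exp (-(α*β) - P34 γ δ β)) x :=
    rr_cont.continuousAt
  have hS1 : ContinuousAt (fun β => S1 α β (P34 γ δ β)) x := by
    have hclosed : ContinuousAt (fun β : ℝ =>
        Real.exp (-(α*β) - P34 γ δ β) / (1 - Real.exp (-(α*β) - P34 γ δ β))) x := by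
      refine hrr.div (continuousAt_const.sub hrr) ?_
      have := rr_lt_one (δ := δ) hα hγ (β := x) hx0
      exact ne_of_gt (by linarith)
    refine hclosed.congr ?_
    filter_upwards [Ioi_mem_nhds hx0] with y hy
    exact (S1_eq hα hγ hy).symm
  have hgc : ContinuousAt (g γ δ ε) x := g_contAt hγ hδ hε hx0 hxe
  refine hS1.add (((S2_contAt hγ hδ hx0).mul hrr).div (continuousAt_const.sub hgc)
    (ne_of_gt (by linarith)))

lemma F_anti (hα : 0 < α) (hγ : 0 < γ) (hδ : 0 < δ) (hε : 0 < ε)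
    {β₁ : ℝ} (hβ₁ : 1 / ε < β₁) (hgβ₁ : g γ δ ε β₁ = 1) :
    StrictAntiOn (F α γ δ ε) (Set.Ioi β₁) := by
  have hβ₁0 : 0 < β₁ := lt_trans (by positivity) hβ₁
  intro a ha b hb hab
  have ha' : β₁ < a := ha
  have ha0 : 0 < a := lt_trans hβ₁0 ha'
  have hb0 : 0 < b := lt_trans ha0 hab
  have hga : g γ δ ε a < 1 := g_lt_one hγ hδ hε hβ₁ hgβ₁ a ha'
  have hgb : g γ δ ε b < g γ δ ε a :=
    g_anti hγ hδ hε (Set.mem_Ioi.mpr (lt_trans hβ₁ ha')) (Set.mem_Ioi.mpr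
      (lt_trans hβ₁ (lt_trans ha' hab))) hab
  rw [F_eq hα hγ ha0, F_eq hα hγ hb0]
  have hrrb := rr_pos (α := α) (γ := γ) (δ := δ) b
  have hrra1 := rr_lt_one (δ := δ) hα hγ (β := a) ha0
  have hrlt := rr_anti hα hγ hδ (a := a) (b := b) hab
  apply add_lt_add
  · exact div_one_sub_lt hrrb.le hrlt hrra1
  · have hS2lt : S2 b (P34 γ δ b) < S2 a (P34 γ δ a) :=
      S2_anti hγ hδ (Set.mem_Ioi.mpr ha0) (Set.mem_Ioi.mpr hb0) hab
    have hN : S2 b (P34 γ δ b) * Real.exp (-(α*b) - P34 γ δ b)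
        < S2 a (P34 γ δ a) * Real.exp (-(α*a) - P34 γ δ a) :=
      mul_lt_mul'' hS2lt hrlt S2_nonneg (rr_pos b).le
    calc S2 b (P34 γ δ b) * Real.exp (-(α*b) - P34 γ δ b) / (1 - g γ δ ε b)
        ≤ S2 b (P34 γ δ b) * Real.exp (-(α*b) - P34 γ δ b) / (1 - g γ δ ε a) := by
          apply div_le_div_of_nonneg_left (mul_nonneg S2_nonneg (rr_pos b).le)
            (by linarith) (by linarith)
      _ < S2 a (P34 γ δ a) * Real.exp (-(α*a) - P34 γ δ a) / (1 - g γ δ ε a) :=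
          (div_lt_div_iff_of_pos_right (by linarith)).mpr hN

lemma F_tendsto_top (hα : 0 < α) (hγ : 0 < γ) (hδ : 0 < δ) (hε : 0 < ε)
    {β₁ : ℝ} (hβ₁ : 1 / ε < β₁) (hgβ₁ : g γ δ ε β₁ = 1) :
    Tendsto (F α γ δ ε) (nhdsWithin β₁ (Set.Ioi β₁)) atTop := by
  have hβ₁0 : 0 < β₁ := lt_trans (by positivity) hβ₁
  have hS1 : Tendsto (fun β => S1 α β (P34 γ δ β)) (nhdsWithin β₁ (Set.Ioi β₁))
      (nhds (S1 α β₁ (P34 γ δ β₁))) := by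
    have hc : ContinuousAt (fun β => S1 α β (P34 γ δ β)) β₁ := by
      have hrr : ContinuousAt (fun β : ℝ => Real.exp (-(α*β) - P34 γ δ β)) β₁ :=
        rr_cont.continuousAt
      have hclosed : ContinuousAt (fun β : ℝ =>
          Real.exp (-(α*β) - P34 γ δ β) / (1 - Real.exp (-(α*β) - P34 γ δ β))) β₁ := by
        refine hrr.div (continuousAt_const.sub hrr) ?_
        have := rr_lt_one (δ := δ) hα hγ (β := β₁) hβ₁0
        exact ne_of_gt (by linarith)
      refine hclosed.congr ?_
      filter_upwards [Ioi_mem_nhds hβ₁0] with y hy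
      exact (S1_eq hα hγ hy).symm
    exact hc.continuousWithinAt
  have hN : Tendsto (fun β => S2 β (P34 γ δ β) * Real.exp (-(α*β) - P34 γ δ β))
      (nhdsWithin β₁ (Set.Ioi β₁))
      (nhds (S2 β₁ (P34 γ δ β₁) * Real.exp (-(α*β₁) - P34 γ δ β₁))) :=
    (((S2_contAt hγ hδ hβ₁0).mul rr_cont.continuousAt).continuousWithinAt)
  have hNpos : 0 < S2 β₁ (P34 γ δ β₁) * Real.exp (-(α*β₁) - P34 γ δ β₁) :=
    mul_pos (S2_pos hγ hβ₁0) (rr_pos β₁)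
  have hg1 : Tendsto (fun β => 1 - g γ δ ε β) (nhdsWithin β₁ (Set.Ioi β₁))
      (nhdsWithin 0 (Set.Ioi 0)) := by
    apply tendsto_nhdsWithin_of_tendsto_nhds_of_eventually_within
    · have hgc := (g_contAt hγ hδ hε hβ₁0 hβ₁)
      have := (hgc.tendsto.const_sub 1).mono_left
        (nhdsWithin_le_nhds (s := Set.Ioi β₁))
      simpa [hgβ₁] using this
    · filter_upwards [self_mem_nhdsWithin] with y hy
      have := g_lt_one hγ hδ hε hβ₁ hgβ₁ y hy
      simpa using (by linarith : (0:ℝ) < 1 - g γ δ ε y)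
  have hinv : Tendsto (fun β => (1 - g γ δ ε β)⁻¹) (nhdsWithin β₁ (Set.Ioi β₁)) atTop :=
    tendsto_inv_nhdsGT_zero.comp hg1
  have hmul : Tendsto (fun β => S2 β (P34 γ δ β) * Real.exp (-(α*β) - P34 γ δ β)
      * (1 - g γ δ ε β)⁻¹) (nhdsWithin β₁ (Set.Ioi β₁)) atTop :=
    Filter.Tendsto.pos_mul_atTop hNpos hN hinv
  have := hS1.add_atTop hmul
  refine this.congr fun β => ?_
  unfold F
  rw [div_eq_mul_inv]

lemma F_nonneg (hα : 0 < α) (hγ : 0 < γ) (hε : 0 < ε) {β : ℝ} (hβ : 0 < β)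
    (hgβ : g γ δ ε β < 1) : 0 ≤ F α γ δ ε β := by
  rw [F_eq hα hγ hβ]
  have h1 := rr_pos (α := α) (γ := γ) (δ := δ) β
  have h2 := rr_lt_one (δ := δ) hα hγ (β := β) hβ
  have h3 := S2_nonneg (β := β) (γ := γ) (δ := δ)
  exact add_nonneg (div_nonneg h1.le (by linarith))
    (div_nonneg (mul_nonneg h3 h1.le) (by linarith))

lemma rr_tendsto_zero (hα : 0 < α) (hγ : 0 < γ) :
    Tendsto (fun β : ℝ => Real.exp (-(α*β) - P34 γ δ β)) atTop (nhds 0) := by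
  have h1 : Tendsto (fun β : ℝ => Real.exp (-(α*β))) atTop (nhds 0) := by
    apply Real.tendsto_exp_atBot.comp
    exact tendsto_neg_atTop_atBot.comp (tendsto_id.const_mul_atTop hα)
  apply tendsto_of_tendsto_of_tendsto_of_le_of_le' tendsto_const_nhds h1
  · filter_upwards with β; exact (rr_pos β).le
  · filter_upwards [eventually_gt_atTop 0] with β hβ
    apply Real.exp_le_exp.mpr
    have := P34_pos (δ := δ) hγ hβ
    linarith

lemma F_tendsto_zero (hα : 0 < α) (hγ : 0 < γ) (hδ : 0 < δ) (hε : 0 < ε)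
    {β₁ : ℝ} (hβ₁ : 1 / ε < β₁) (hgβ₁ : g γ δ ε β₁ = 1) :
    Tendsto (F α γ δ ε) atTop (nhds 0) := by
  have hβ₁0 : 0 < β₁ := lt_trans (by positivity) hβ₁
  set β₂ := β₁ + 1 with hβ₂def
  have hβ₂ : β₁ < β₂ := by simp [hβ₂def]
  have hβ₂0 : 0 < β₂ := by linarith
  set C := S2 β₂ (P34 γ δ β₂) with hC
  set c0 := 1 - g γ δ ε β₂ with hc0
  have hc0pos : 0 < c0 := by
    have := g_lt_one hγ hδ hε hβ₁ hgβ₁ β₂ hβ₂; rw [hc0]; linarith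
  set r2 := Real.exp (-(α*β₂) - P34 γ δ β₂) with hr2
  have hr2lt : r2 < 1 := rr_lt_one (δ := δ) hα hγ hβ₂0
  have hr2pos : 0 < r2 := rr_pos β₂
  set K := (1 - r2)⁻¹ + C / c0 with hK
  have hbound : ∀ β, β₂ ≤ β →
      F α γ δ ε β ≤ Real.exp (-(α*β) - P34 γ δ β) * K := by
    intro β hβ
    have hβ0 : 0 < β := lt_of_lt_of_le hβ₂0 hβ
    have hββ₁ : β₁ < β := lt_of_lt_of_le hβ₂ hβ
    have hrpos := rr_pos (α := α) (γ := γ) (δ := δ) β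
    have hrle : Real.exp (-(α*β) - P34 γ δ β) ≤ r2 := by
      rcases eq_or_lt_of_le hβ with h | h
      · rw [hr2, ← h]
      · exact (rr_anti hα hγ hδ h).le
    have hS2le : S2 β (P34 γ δ β) ≤ C := by
      rcases eq_or_lt_of_le hβ with h | h
      · rw [hC, ← h]
      · exact (S2_anti hγ hδ (Set.mem_Ioi.mpr hβ₂0) (Set.mem_Ioi.mpr hβ0) h).le
    have hgle : g γ δ ε β ≤ g γ δ ε β₂ := by
      rcases eq_or_lt_of_le hβ with h | h
      · rw [← h]
      · exact (g_anti hγ hδ hε (Set.mem_Ioi.mpr (lt_trans hβ₁ hβ₂))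
          (Set.mem_Ioi.mpr (lt_trans hβ₁ hββ₁)) h).le
    have hgβ : g γ δ ε β < 1 := g_lt_one hγ hδ hε hβ₁ hgβ₁ β hββ₁
    rw [F_eq hα hγ hβ0, hK, mul_add]
    apply add_le_add
    · have h1 : 1 - r2 ≤ 1 - Real.exp (-(α*β) - P34 γ δ β) := by linarith
      calc Real.exp (-(α*β) - P34 γ δ β) / (1 - Real.exp (-(α*β) - P34 γ δ β))
          ≤ Real.exp (-(α*β) - P34 γ δ β) / (1 - r2) :=
            div_le_div_of_nonneg_left hrpos.le (by linarith) h1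
        _ = Real.exp (-(α*β) - P34 γ δ β) * (1 - r2)⁻¹ := by rw [div_eq_mul_inv]
    · have hnum : S2 β (P34 γ δ β) * Real.exp (-(α*β) - P34 γ δ β)
          ≤ C * Real.exp (-(α*β) - P34 γ δ β) :=
        mul_le_mul_of_nonneg_right hS2le hrpos.le
      calc S2 β (P34 γ δ β) * Real.exp (-(α*β) - P34 γ δ β) / (1 - g γ δ ε β)
          ≤ C * Real.exp (-(α*β) - P34 γ δ β) / c0 := by
            apply div_le_div₀ (mul_nonneg S2_nonneg hrpos.le) hnum hc0pos
              (by rw [hc0]; linarith)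
        _ = Real.exp (-(α*β) - P34 γ δ β) * (C / c0) := by ring
  have hKrr : Tendsto (fun β : ℝ => Real.exp (-(α*β) - P34 γ δ β) * K) atTop (nhds 0) := by
    have := (rr_tendsto_zero hα hγ (δ := δ)).mul_const K
    simpa using this
  apply tendsto_of_tendsto_of_tendsto_of_le_of_le' tendsto_const_nhds hKrr
  · filter_upwards [eventually_ge_atTop β₂] with β hβ
    exact F_nonneg hα hγ hε (lt_of_lt_of_le hβ₂0 hβ)
      (g_lt_one hγ hδ hε hβ₁ hgβ₁ β (lt_of_lt_of_le hβ₂ hβ))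
  · filter_upwards [eventually_ge_atTop β₂] with β hβ
    exact hbound β hβ

end main

/-- Lemma 2 (definition of `β_c`): with `β₁` the solution of `g = 1` on `(1/ε,∞)`,
`g < 1` on `(β₁,∞)` (so `F` is well defined there), `F` is strictly decreasing on
`(β₁,∞)`, tends to `+∞` at `β₁⁺` and to `0` at `+∞`; hence there is a unique
`β_c ∈ (β₁,∞)` with `F(β_c) = 1`, and `F(β) > 1` iff `β₁ < β < β_c`. -/
theorem stmt_6 (α γ δ ε : ℝ) (hα : 0 < α) (hγ : 0 < γ) (hδ : 0 < δ) (hε : 0 < ε)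
    (β₁ : ℝ) (hβ₁ : 1 / ε < β₁) (hgβ₁ : g γ δ ε β₁ = 1) :
    (∀ b, β₁ < b → g γ δ ε b < 1) ∧
    StrictAntiOn (F α γ δ ε) (Set.Ioi β₁) ∧
    Tendsto (F α γ δ ε) (nhdsWithin β₁ (Set.Ioi β₁)) atTop ∧
    Tendsto (F α γ δ ε) atTop (nhds 0) ∧
    ∃ βc, β₁ < βc ∧ F α γ δ ε βc = 1 ∧
      (∀ b, β₁ < b → F α γ δ ε b = 1 → b = βc) ∧
      (∀ b, β₁ < b → (1 < F α γ δ ε b ↔ b < βc)) := by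
  have hβ₁0 : 0 < β₁ := lt_trans (by positivity) hβ₁
  have hglt := g_lt_one hγ hδ hε hβ₁ hgβ₁
  have hanti := F_anti hα hγ hδ hε hβ₁ hgβ₁
  have htop := F_tendsto_top hα hγ hδ hε hβ₁ hgβ₁
  have hzero := F_tendsto_zero hα hγ hδ hε hβ₁ hgβ₁
  refine ⟨hglt, hanti, htop, hzero, ?_⟩
  obtain ⟨a, haF, ha⟩ :=
    ((htop.eventually (eventually_gt_atTop 1)).and eventually_mem_nhdsWithin).exists
  have ha' : β₁ < a := ha
  obtain ⟨b, hbF, hb⟩ :=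
    ((hzero.eventually_lt_const (show (0:ℝ) < 1 by norm_num)).and
      (eventually_ge_atTop (a+1))).exists
  have hab : a < b := by linarith
  have hcont : ContinuousOn (F α γ δ ε) (Set.Icc a b) := by
    intro x hx
    have hx1 : β₁ < x := lt_of_lt_of_le ha' hx.1
    exact (F_contAt hα hγ hδ hε (lt_trans hβ₁0 hx1) (lt_trans hβ₁ hx1)
      (hglt x hx1)).continuousWithinAt
  have hmem : (1:ℝ) ∈ Set.Icc (F α γ δ ε b) (F α γ δ ε a) := ⟨hbF.le, haF.le⟩
  obtain ⟨βc, hβcmem, hβcF⟩ := intermediate_value_Icc' hab.le hcont hmem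
  have hβc1 : β₁ < βc := lt_of_lt_of_le ha' hβcmem.1
  refine ⟨βc, hβc1, hβcF, ?_, ?_⟩
  · intro x hx hFx
    by_contra hne
    rcases lt_or_gt_of_ne hne with h | h
    · have := hanti (Set.mem_Ioi.mpr hx) (Set.mem_Ioi.mpr hβc1) h
      rw [hFx, hβcF] at this; exact lt_irrefl _ this
    · have := hanti (Set.mem_Ioi.mpr hβc1) (Set.mem_Ioi.mpr hx) h
      rw [hFx, hβcF] at this; exact lt_irrefl _ this
  · intro x hx
    constructor
    · intro h1
      by_contra hle
      push_neg at hle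
      rcases eq_or_lt_of_le hle with h | h
      · rw [← h, hβcF] at h1; exact lt_irrefl _ h1
      · have := hanti (Set.mem_Ioi.mpr hβc1) (Set.mem_Ioi.mpr hx) h
        rw [hβcF] at this; linarith
    · intro h
      have := hanti (Set.mem_Ioi.mpr hx) (Set.mem_Ioi.mpr hβc1) h
      rw [hβcF] at this; exact this
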